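/- In any pure Nash equilibrium network of the adversarial network creation game, if two agents u and v satisfy d_G(u,v) ≥ 4ℓ for some positive integer ℓ, then the edge price satisfies α ≥ (|E|/(|E|+1))·2ℓ². Consequently every Nash equilibrium network has diameter O(√α). -/

import Mathlib

open scoped BigOperators ENNReal

/-- A walk of length `n` between two vertices under step relation `r`. -/
def walkLen {V : Type*} (r : V → V → Prop) : ℕ → V → V → Prop
  | 0, u, v => u = v
  | (n+1), u, v => ∃ w, r u w ∧ walkLen r n w v

/-- Adjacency in a multigraph given by a multiset of (undirected) edges. -/
def mAdj {V : Type*} (m : Multiset (Sym2 V)) (u v : V) : Prop := s(u, v) ∈ m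

/-- Hop-count distance (possibly infinite) in a multigraph. -/
noncomputable def medist {V : Type*} (m : Multiset (Sym2 V)) (u v : V) : ℕ∞ :=
  sInf ((fun n : ℕ => (n : ℕ∞)) '' {n | walkLen (mAdj m) n u v})

/-- Expected distance cost (in `ℝ≥0∞`) of vertex `u` in a multigraph under uniform random
deletion of one edge (if there are no edges, the plain distance cost). -/
noncomputable def evCost {V : Type*} [DecidableEq V] [Fintype V]
    (m : Multiset (Sym2 V)) (u : V) : ℝ≥0∞ :=
  if Multiset.card m = 0 then ∑ v : V, ((medist m u v : ℕ∞) : ℝ≥0∞)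
  else (Multiset.card m : ℝ≥0∞)⁻¹ *
    (m.map (fun e => ∑ v : V, ((medist (m.erase e) u v : ℕ∞) : ℝ≥0∞))).sum

/-- The multigraph built from a strategy profile of the network creation game. -/
def edgeMS {n : ℕ} (s : Fin n → Multiset (Fin n)) : Multiset (Sym2 (Fin n)) :=
  ∑ u : Fin n, (s u).map (fun v => s(u, v))

/-- Cost of agent `u`: `α` per owned edge plus expected distance cost. -/
noncomputable def agentCost {n : ℕ} (α : ℝ≥0∞) (s : Fin n → Multiset (Fin n)) (u : Fin n) :
    ℝ≥0∞ :=
  α * (Multiset.card (s u) : ℝ≥0∞) + evCost (edgeMS s) u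

/-- Pure Nash equilibrium: no agent can strictly decrease its cost by a unilateral change
of the multiset of edges it owns (an agent may not buy edges to itself). -/
def IsNE {n : ℕ} (α : ℝ≥0∞) (s : Fin n → Multiset (Fin n)) : Prop :=
  ∀ u : Fin n, ∀ t : Multiset (Fin n), u ∉ t →
    agentCost α s u ≤ agentCost α (Function.update s u t) u

/-!
Buying the edge `{u, v}` when `d(u, v) ≥ 4ℓ` shortens, in every deletion scenario that keeps the
new edge, the distances from `u` to the `ℓ` vertices nearest to `v` on a shortest `u`-`v` path by
at least `2ℓ` each. The new edge survives with probability `|E|/(|E|+1)`, and the surviving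
scenario of deleting it is no worse than the average old one, so the expected cost drops by at
least `(|E|/(|E|+1))·2ℓ²`; at equilibrium this cannot exceed `α`. The expected cost is finite
at equilibrium because doubling edges to everybody is a finite-cost deviation. Taking
`ℓ = ⌊√α⌋ + 1` and `|E|/(|E|+1) ≥ 1/2` gives the diameter bound.
-/

namespace walkLen

variable {V : Type*} {r r' : V → V → Prop} {u v w : V}

theorem append {a b : ℕ} (h₁ : walkLen r a u w) (h₂ : walkLen r b w v) :
    walkLen r (a + b) u v := by
  induction a generalizing u with
  | zero => cases h₁; simpa using h₂
  | succ a ih =>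
    obtain ⟨x, hux, hx⟩ := h₁
    rw [Nat.add_right_comm]
    exact ⟨x, hux, ih hx⟩

theorem exists_split {a b : ℕ} (h : walkLen r (a + b) u v) :
    ∃ w, walkLen r a u w ∧ walkLen r b w v := by
  induction a generalizing u with
  | zero => exact ⟨u, rfl, by simpa using h⟩
  | succ a ih =>
    rw [Nat.add_right_comm] at h
    obtain ⟨x, hux, hx⟩ := h
    obtain ⟨w, h₁, h₂⟩ := ih hx
    exact ⟨w, ⟨x, hux, h₁⟩, h₂⟩

theorem symm (hr : ∀ x y, r x y → r y x) {n : ℕ} (h : walkLen r n u v) : walkLen r n v u := by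
  induction n generalizing u with
  | zero => exact h.symm
  | succ n ih =>
    obtain ⟨x, hux, hx⟩ := h
    exact (ih hx).append ⟨u, hr _ _ hux, rfl⟩

theorem mono (hrr' : ∀ x y, r x y → r' x y) {n : ℕ} (h : walkLen r n u v) :
    walkLen r' n u v := by
  induction n generalizing u with
  | zero => exact h
  | succ n ih =>
    obtain ⟨x, hux, hx⟩ := h
    exact ⟨x, hrr' _ _ hux, ih hx⟩

end walkLen

section medist

variable {V : Type*} {m m' : Multiset (Sym2 V)} {u v w : V}

theorem medist_le_of_walkLen {n : ℕ} (h : walkLen (mAdj m) n u v) : medist m u v ≤ n :=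
  sInf_le ⟨n, h, rfl⟩

theorem walkLen_toNat_medist (h : medist m u v ≠ ⊤) :
    walkLen (mAdj m) (medist m u v).toNat u v := by
  have hne : ((fun n : ℕ ↦ (n : ℕ∞)) '' {n | walkLen (mAdj m) n u v}).Nonempty :=
    Set.nonempty_iff_ne_empty.mpr fun he ↦ h (by rw [medist, he, sInf_empty])
  obtain ⟨n, hn, hd⟩ := csInf_mem hne
  rwa [medist, ← hd, ENat.toNat_natCast]

theorem medist_self : medist m u u = 0 :=
  nonpos_iff_eq_zero.mp (medist_le_of_walkLen (n := 0) rfl)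

theorem medist_le_one_of_mem (h : s(u, v) ∈ m) : medist m u v ≤ 1 :=
  medist_le_of_walkLen (n := 1) ⟨v, h, rfl⟩

theorem medist_anti (h : m ≤ m') : medist m' u v ≤ medist m u v :=
  le_sInf <| by
    rintro _ ⟨n, hn, rfl⟩
    exact medist_le_of_walkLen (hn.mono fun _ _ ↦ Multiset.mem_of_le h)

theorem medist_comm : medist m u v = medist m v u := by
  suffices ∀ {x y : V}, medist m y x ≤ medist m x y from le_antisymm this this
  intro x y
  refine le_sInf ?_
  rintro _ ⟨n, hn, rfl⟩
  exact medist_le_of_walkLen (hn.symm fun _ _ ↦ by simp [mAdj, Sym2.eq_swap])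

theorem medist_triangle : medist m u w ≤ medist m u v + medist m v w := by
  rcases eq_or_ne (medist m u v) ⊤ with h₁ | h₁
  · simp [h₁]
  rcases eq_or_ne (medist m v w) ⊤ with h₂ | h₂
  · simp [h₂]
  calc medist m u w ≤ ((medist m u v).toNat + (medist m v w).toNat : ℕ) :=
        medist_le_of_walkLen ((walkLen_toNat_medist h₁).append (walkLen_toNat_medist h₂))
    _ = medist m u v + medist m v w := by
        push_cast
        rw [ENat.natCast_toNat h₁, ENat.natCast_toNat h₂]

theorem exists_medist_eq_sub {d j : ℕ} (hd : medist m u v = d) (hj : j ≤ d) :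
    ∃ w, medist m u w = (d - j : ℕ) ∧ medist m w v ≤ j := by
  have hwalk : walkLen (mAdj m) (d - j + j) u v := by
    simpa [Nat.sub_add_cancel hj, hd] using walkLen_toNat_medist (m := m) (u := u) (v := v)
  obtain ⟨w, huw, hwv⟩ := hwalk.exists_split
  have hle := medist_le_of_walkLen huw
  have hge : (d : ℕ∞) ≤ medist m u w + j :=
    hd ▸ medist_triangle.trans (add_le_add_right (medist_le_of_walkLen hwv) _)
  refine ⟨w, le_antisymm hle ?_, medist_le_of_walkLen hwv⟩
  lift medist m u w to ℕ using ne_top_of_le_ne_top (ENat.natCast_ne_top _) hle with x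
  norm_cast at hge ⊢
  omega

theorem ne_of_natCast_le_medist {k : ℕ} (hk : k ≠ 0) (h : (k : ℕ∞) ≤ medist m u v) : u ≠ v := by
  rintro rfl
  rw [medist_self, nonpos_iff_eq_zero] at h
  exact hk (by exact_mod_cast h)

theorem medist_zero_of_ne (h : u ≠ v) : medist (0 : Multiset (Sym2 V)) u v = ⊤ := by
  refine sInf_eq_top.mpr ?_
  rintro _ ⟨n, hn, rfl⟩
  cases n with
  | zero => exact absurd hn h
  | succ n => obtain ⟨x, hx, -⟩ := hn; simp [mAdj] at hx

end medist

section distCost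

open Finset

variable {V : Type*} [Fintype V] {m m' : Multiset (Sym2 V)} {u v : V}

noncomputable def distCost (m : Multiset (Sym2 V)) (u : V) : ℝ≥0∞ :=
  ∑ w, (medist m u w : ℝ≥0∞)

theorem distCost_anti (h : m ≤ m') : distCost m' u ≤ distCost m u :=
  sum_le_sum fun _ _ ↦ ENat.toENNReal_le.mpr (medist_anti h)

theorem distCost_eq_top_of_medist (h : medist m u v = ⊤) : distCost m u = ⊤ :=
  ENNReal.sum_eq_top.mpr ⟨v, mem_univ _, by simp [h]⟩

/-- On a shortest `u`-`v` path the vertex at distance `d - j` from `u`, for `j < ℓ`, comes within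
`1 + j` of `u` through the new edge; this saves at least `d - 2j - 1 ≥ 2ℓ` for each of them. -/
theorem distCost_cons_add_le {ℓ : ℕ} (hd : ((4 * ℓ : ℕ) : ℕ∞) ≤ medist m u v) :
    distCost (s(u, v) ::ₘ m) u + 2 * (ℓ : ℝ≥0∞) ^ 2 ≤ distCost m u := by
  classical
  rcases eq_or_ne (medist m u v) ⊤ with htop | hfin
  · simp [distCost_eq_top_of_medist htop]
  obtain ⟨d, hd_eq⟩ := ENat.ne_top_iff_exists.mp hfin
  have h4ℓ : 4 * ℓ ≤ d := by exact_mod_cast hd_eq ▸ hd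
  have hpath : ∀ j < ℓ, ∃ w, medist m u w = (d - j : ℕ) ∧ medist m w v ≤ j :=
    fun j hj ↦ exists_medist_eq_sub hd_eq.symm (by omega)
  have : Nonempty V := ⟨u⟩
  choose! y hy_old hy_v using hpath
  set m' := s(u, v) ::ₘ m
  have hy_new : ∀ j < ℓ, medist m' u (y j) ≤ (1 + j : ℕ) := fun j hj ↦
    calc medist m' u (y j) ≤ medist m' u v + medist m' v (y j) := medist_triangle
      _ ≤ 1 + j := by
        gcongr
        · exact medist_le_one_of_mem (Multiset.mem_cons_self _ _)
        · rw [medist_comm]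
          exact (medist_anti (Multiset.le_cons_self _ _)).trans (hy_v j hj)
      _ = (1 + j : ℕ) := by push_cast; rfl
  have hsave : ∀ j < ℓ, (medist m' u (y j) : ℝ≥0∞) + 2 * ℓ ≤ medist m u (y j) := by
    intro j hj
    rw [hy_old j hj, ENat.toENNReal_coe]
    calc (medist m' u (y j) : ℝ≥0∞) + 2 * ℓ ≤ ((1 + j : ℕ) : ℝ≥0∞) + 2 * ℓ := by
          gcongr
          simpa using ENat.toENNReal_le.mpr (hy_new j hj)
      _ ≤ ((d - j : ℕ) : ℝ≥0∞) := by exact_mod_cast (by omega : 1 + j + 2 * ℓ ≤ d - j)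
  have hinj : Set.InjOn y (range ℓ : Set ℕ) := by
    intro a ha b hb hab
    simp only [coe_range, Set.mem_Iio] at ha hb
    have := (hy_old a ha).symm.trans (hab ▸ hy_old b hb)
    norm_cast at this
    omega
  set T := (range ℓ).image y
  calc distCost m' u + 2 * (ℓ : ℝ≥0∞) ^ 2
      = ∑ w ∈ Tᶜ, (medist m' u w : ℝ≥0∞) + ∑ w ∈ T, ((medist m' u w : ℝ≥0∞) + 2 * ℓ) := by
        rw [sum_add_distrib, sum_const, card_image_of_injOn hinj, card_range, nsmul_eq_mul,
          distCost, ← sum_compl_add_sum T]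
        ring
    _ ≤ ∑ w ∈ Tᶜ, (medist m u w : ℝ≥0∞) + ∑ w ∈ T, (medist m u w : ℝ≥0∞) := by
        gcongr with w _ w hw
        · exact medist_anti (Multiset.le_cons_self _ _)
        · obtain ⟨j, hj, rfl⟩ := mem_image.mp hw
          exact hsave j (mem_range.mp hj)
    _ = distCost m u := sum_compl_add_sum T _

end distCost

theorem Multiset.sum_map_const_eq_card_mul {α R : Type*} [NonAssocSemiring R] (m : Multiset α)
    (c : R) : (m.map fun _ ↦ c).sum = Multiset.card m * c := by
  rw [Multiset.map_const', Multiset.sum_replicate, nsmul_eq_mul]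

section evCost

variable {V : Type*} [DecidableEq V] [Fintype V] {m : Multiset (Sym2 V)} {u v : V}

theorem evCost_eq_of_ne_zero (hm : m ≠ 0) :
    evCost m u = (Multiset.card m : ℝ≥0∞)⁻¹ * (m.map fun e ↦ distCost (m.erase e) u).sum := by
  rw [evCost, if_neg (by simpa using hm)]
  rfl

theorem distCost_le_evCost : distCost m u ≤ evCost m u := by
  rcases eq_or_ne m 0 with rfl | hm
  · rfl
  have hcard : (Multiset.card m : ℝ≥0∞) ≠ 0 := by simpa using hm
  rw [evCost_eq_of_ne_zero hm]
  calc distCost m u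
      = (Multiset.card m : ℝ≥0∞)⁻¹ * (m.map fun _ ↦ distCost m u).sum := by
        rw [Multiset.sum_map_const_eq_card_mul, ENNReal.inv_mul_cancel_left hcard (by simp)]
    _ ≤ _ := by
        gcongr
        exact Multiset.sum_map_le_sum_map _ _ fun e _ ↦ distCost_anti (Multiset.erase_le e m)

theorem evCost_le_of_forall_distCost_erase_le {c : ℝ≥0∞}
    (h : ∀ e, distCost (m.erase e) u ≤ c) : evCost m u ≤ c := by
  rcases eq_or_ne m 0 with rfl | hm
  · exact h s(u, u)
  have hcard : (Multiset.card m : ℝ≥0∞) ≠ 0 := by simpa using hm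
  rw [evCost_eq_of_ne_zero hm]
  calc _ ≤ (Multiset.card m : ℝ≥0∞)⁻¹ * (m.map fun _ ↦ c).sum := by
        gcongr
        exact Multiset.sum_map_le_sum_map _ _ fun e _ ↦ h e
    _ = c := by rw [Multiset.sum_map_const_eq_card_mul, ENNReal.inv_mul_cancel_left hcard (by simp)]

theorem evCost_le_card_of_two_le_count (h : ∀ w ≠ u, 2 ≤ Multiset.count s(u, w) m) :
    evCost m u ≤ Fintype.card V := by
  refine evCost_le_of_forall_distCost_erase_le fun e ↦ ?_
  calc distCost (m.erase e) u ≤ ∑ _w : V, (1 : ℝ≥0∞) := by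
        refine Finset.sum_le_sum fun w _ ↦ ?_
        rcases eq_or_ne w u with rfl | hw
        · simp [medist_self]
        have hmem : s(u, w) ∈ m.erase e := by
          rw [← Multiset.one_le_count_iff_mem]
          have := h w hw
          rcases eq_or_ne s(u, w) e with rfl | hne
          · rw [Multiset.count_erase_self]; omega
          · rw [Multiset.count_erase_of_ne hne]; omega
        simpa using ENat.toENNReal_le.mpr (medist_le_one_of_mem hmem)
    _ = Fintype.card V := by simp

theorem evCost_cons_add_le {ℓ : ℕ} (hm : m ≠ 0) (hd : ((4 * ℓ : ℕ) : ℕ∞) ≤ medist m u v) :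
    evCost (s(u, v) ::ₘ m) u +
        (Multiset.card m : ℝ≥0∞) / (Multiset.card m + 1) * (2 * (ℓ : ℝ≥0∞) ^ 2) ≤
      evCost m u := by
  set M : ℝ≥0∞ := (Multiset.card m : ℝ≥0∞)
  set L : ℝ≥0∞ := 2 * (ℓ : ℝ≥0∞) ^ 2
  set A := distCost m u
  set F := (m.map fun e ↦ distCost (m.erase e) u).sum
  set G := (m.map fun e ↦ distCost (s(u, v) ::ₘ m.erase e) u).sum
  have hM : M ≠ 0 := by simpa [M] using hm
  have hM' : M ≠ ⊤ := by simp [M]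
  have hnew : evCost (s(u, v) ::ₘ m) u = (M + 1)⁻¹ * (A + G) := by
    rw [evCost_eq_of_ne_zero (Multiset.cons_ne_zero), Multiset.card_cons, Multiset.map_cons,
      Multiset.erase_cons_head, Multiset.sum_cons, Multiset.map_congr rfl fun e he ↦ by
        rw [Multiset.erase_cons_tail_of_mem he]]
    push_cast
    rfl
  have hGF : G + M * L ≤ F := by
    rw [← Multiset.sum_map_const_eq_card_mul, ← Multiset.sum_map_add]
    refine Multiset.sum_map_le_sum_map _ _ fun e he ↦ distCost_cons_add_le ?_
    exact hd.trans (medist_anti (Multiset.erase_le e m))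
  have hAF : A ≤ M⁻¹ * F := evCost_eq_of_ne_zero hm ▸ distCost_le_evCost
  calc evCost (s(u, v) ::ₘ m) u + M / (M + 1) * L = (M + 1)⁻¹ * (A + (G + M * L)) := by
        rw [hnew, div_eq_mul_inv]; ring
    _ ≤ (M + 1)⁻¹ * (M⁻¹ * F + F) := by gcongr
    _ = (M + 1)⁻¹ * ((M + 1) * (M⁻¹ * F)) := by
        rw [add_mul, one_mul, ← mul_assoc, ENNReal.mul_inv_cancel hM hM', one_mul, add_comm F]
    _ = M⁻¹ * F := ENNReal.inv_mul_cancel_left (by simp) (by simpa using hM')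
    _ = evCost m u := (evCost_eq_of_ne_zero hm).symm

end evCost

theorem le_four_mul_sqrt_add_four {d : ℕ} {a : ℝ} (h : ∀ ℓ : ℕ, 4 * ℓ ≤ d → (ℓ : ℝ) ^ 2 ≤ a) :
    (d : ℝ) ≤ 4 * √a + 4 := by
  by_contra! hlt
  set ℓ := ⌊√a⌋₊ + 1
  have h4ℓ : 4 * ℓ ≤ d := by
    have : ((4 * ℓ : ℕ) : ℝ) < d := by
      push_cast [ℓ]
      linarith [Nat.floor_le (Real.sqrt_nonneg a)]
    exact_mod_cast this.le
  have : (ℓ : ℝ) ≤ √a := Real.le_sqrt_of_sq_le (h ℓ h4ℓ)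
  exact (Nat.lt_floor_add_one √a).not_ge (by simpa [ℓ] using this)

theorem ENNReal.le_natCast_div_add_one_mul {M : ℕ} (hM : M ≠ 0) (x : ℝ≥0∞) :
    x ≤ (M : ℝ≥0∞) / (M + 1) * (2 * x) := by
  have h : 1 ≤ (M : ℝ≥0∞) / (M + 1) * 2 := by
    rw [← ENNReal.mul_div_right_comm, ENNReal.le_div_iff_mul_le (by simp) (by simp), one_mul]
    exact_mod_cast (by omega : M + 1 ≤ M * 2)
  calc x = 1 * x := (one_mul x).symm
    _ ≤ (M : ℝ≥0∞) / (M + 1) * 2 * x := by gcongr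
    _ = _ := mul_assoc _ _ _

section game

open Finset

variable {n : ℕ} {α : ℝ≥0∞} {s : Fin n → Multiset (Fin n)}

theorem map_le_edgeMS (s : Fin n → Multiset (Fin n)) (u : Fin n) :
    (s u).map (fun v ↦ s(u, v)) ≤ edgeMS s :=
  single_le_sum (f := fun x ↦ (s x).map fun v ↦ s(x, v)) (fun _ _ ↦ zero_le) (mem_univ u)

theorem edgeMS_update_cons (s : Fin n → Multiset (Fin n)) (u v : Fin n) :
    edgeMS (Function.update s u (v ::ₘ s u)) = s(u, v) ::ₘ edgeMS s := by
  unfold edgeMS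
  rw [← add_sum_erase _ _ (mem_univ u), ← add_sum_erase _ _ (mem_univ u),
    Function.update_self, Multiset.map_cons, Multiset.cons_add]
  congr 2
  exact sum_congr rfl fun x hx ↦ by rw [Function.update_of_ne (ne_of_mem_erase hx)]

/-- Buying two parallel edges to every other agent has finite cost, since no single deletion
disconnects `u`. -/
theorem IsNE.evCost_ne_top (hNE : IsNE α s) (hα : α ≠ ⊤) (u : Fin n) :
    evCost (edgeMS s) u ≠ ⊤ := by
  set q := (univ.erase u).val
  have hu : u ∉ q + q := by
    rw [Multiset.mem_add, or_self]
    exact notMem_erase u univ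
  have hcount : ∀ w ≠ u,
      2 ≤ Multiset.count s(u, w) (edgeMS (Function.update s u (q + q))) := by
    intro w hw
    have hmem : s(u, w) ∈ q.map fun v ↦ s(u, v) :=
      Multiset.mem_map_of_mem _ (mem_erase.mpr ⟨hw, mem_univ w⟩)
    calc 2 ≤ Multiset.count s(u, w) ((q + q).map fun v ↦ s(u, v)) := by
          rw [Multiset.map_add, Multiset.count_add]
          have := Multiset.one_le_count_iff_mem.mpr hmem
          omega
      _ ≤ _ := Multiset.count_le_of_le _ <| by
          simpa using map_le_edgeMS (Function.update s u (q + q)) u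
  have hdev : agentCost α (Function.update s u (q + q)) u ≠ ⊤ :=
    ENNReal.add_ne_top.mpr ⟨ENNReal.mul_ne_top hα (ENNReal.natCast_ne_top _),
      ne_top_of_le_ne_top (ENNReal.natCast_ne_top _) (evCost_le_card_of_two_le_count hcount)⟩
  exact ne_top_of_le_ne_top hdev (le_add_self.trans (hNE u _ hu))

theorem IsNE.medist_ne_top (hNE : IsNE α s) (hα : α ≠ ⊤) (u v : Fin n) :
    medist (edgeMS s) u v ≠ ⊤ := fun h ↦
  hNE.evCost_ne_top hα u (top_le_iff.mp (distCost_eq_top_of_medist h ▸ distCost_le_evCost))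

theorem IsNE.card_div_mul_le (hown : ∀ u : Fin n, u ∉ s u) (hNE : IsNE α s) {u v : Fin n}
    {ℓ : ℕ} (hd : ((4 * ℓ : ℕ) : ℕ∞) ≤ medist (edgeMS s) u v) :
    (Multiset.card (edgeMS s) : ℝ≥0∞) / (Multiset.card (edgeMS s) + 1) * (2 * (ℓ : ℝ≥0∞) ^ 2)
      ≤ α := by
  rcases eq_or_ne α ⊤ with rfl | hα
  · exact le_top
  rcases eq_or_ne (edgeMS s) 0 with hm | hm
  · simp [hm]
  rcases Nat.eq_zero_or_pos ℓ with rfl | hℓ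
  · simp
  have hu : u ∉ v ::ₘ s u := by
    rw [Multiset.mem_cons, not_or]
    exact ⟨ne_of_natCast_le_medist (by omega) hd, hown u⟩
  have hdev := hNE u _ hu
  rw [agentCost, agentCost, Function.update_self, edgeMS_update_cons, Multiset.card_cons,
    Nat.cast_add_one, mul_add_one, add_assoc,
    ENNReal.add_le_add_iff_left (ENNReal.mul_ne_top hα (ENNReal.natCast_ne_top _))] at hdev
  have hsave := evCost_cons_add_le hm hd
  have hfin : evCost (s(u, v) ::ₘ edgeMS s) u ≠ ⊤ :=
    ne_top_of_le_ne_top (hNE.evCost_ne_top hα u) (le_self_add.trans hsave)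
  rw [← ENNReal.add_le_add_iff_left hfin, add_comm _ α]
  exact hsave.trans hdev

end game

/-- In any pure Nash equilibrium of the adversarial network creation game, if two agents
`u` and `v` are at distance at least `4ℓ`, then `α ≥ (|E|/(|E|+1))·2ℓ²`; consequently
(for `α < ∞` and `n ≥ 2`) every Nash equilibrium network has diameter `O(√α)`, concretely
all distances are finite and at most `4√α + 4`. -/
theorem NE_distance_bound {n : ℕ} (α : ℝ≥0∞) (s : Fin n → Multiset (Fin n))
    (hown : ∀ u : Fin n, u ∉ s u) (hNE : IsNE α s) :
    (∀ (u v : Fin n) (ℓ : ℕ), 1 ≤ ℓ →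
      ((4 * ℓ : ℕ) : ℕ∞) ≤ medist (edgeMS s) u v →
      ((Multiset.card (edgeMS s) : ℝ≥0∞) / ((Multiset.card (edgeMS s) : ℝ≥0∞) + 1)) *
        (2 * (ℓ : ℝ≥0∞) ^ 2) ≤ α) ∧
    (α ≠ ⊤ → 2 ≤ n → ∀ x y : Fin n,
      medist (edgeMS s) x y ≠ ⊤ ∧
      ((medist (edgeMS s) x y).toNat : ℝ) ≤ 4 * Real.sqrt α.toReal + 4) := by
  refine ⟨fun u v ℓ _ hd ↦ hNE.card_div_mul_le hown hd, fun hα _ x y ↦ ?_⟩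
  have hfin := hNE.medist_ne_top hα x y
  refine ⟨hfin, le_four_mul_sqrt_add_four fun ℓ hℓ ↦ ?_⟩
  have hd : ((4 * ℓ : ℕ) : ℕ∞) ≤ medist (edgeMS s) x y := by
    rw [← ENat.natCast_toNat hfin]
    exact_mod_cast hℓ
  rcases Nat.eq_zero_or_pos ℓ with rfl | hℓ0
  · simp
  have hm : edgeMS s ≠ 0 := fun hm ↦
    hfin (hm ▸ medist_zero_of_ne (ne_of_natCast_le_medist (by omega) hd))
  have hsq : (ℓ : ℝ≥0∞) ^ 2 ≤ α :=
    (ENNReal.le_natCast_div_add_one_mul (by simpa using hm) _).trans (hNE.card_div_mul_le hown hd)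
  simpa using ENNReal.toReal_mono hα hsq
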